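/- arXiv:1607.05885 — 3 statements merged into one kernel-verified Lean document; each statement's English description precedes it below -/
import Mathlib

section
/- Let b > 0, d > 1, ν ∈ ℕ₀, m ∈ ℤⁿ, ε > 0 and R > 0, and let E ⊂ d·Q_{ν,m} be a Lebesgue-measurable set with |E| ≥ ε·2^{−νn} (i.e. |E| ≥ ε·|Q_{ν,m}|). Then for every x ∈ Q_{ν,m} one has (η_{ν,R} ∗ χ_E)(x) = ∫_E 2^{nν}(1 + 2^ν|x − y|)^{−R} dy ≥ ε·(1 + (1+d)√n)^{−R}. In particular, χ_{Q_{ν,m}}(x) ≤ c·(η_{ν,R} ∗ χ_E)(x) for all x ∈ ℝⁿ, with the constant c = ε^{−1}(1 + (1+d)√n)^{R} independent of ν and m. -/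
open MeasureTheory

noncomputable section

/-- The closed axis-parallel cube in `ℝⁿ` centered at `z` with side length `l`. -/
def cube (n : ℕ) (z : EuclideanSpace ℝ (Fin n)) (l : ℝ) : Set (EuclideanSpace ℝ (Fin n)) :=
  {y | ∀ i, |y i - z i| ≤ l / 2}

/-- The lattice point `2^{-ν} m ∈ ℝⁿ`. -/
def latticePt (n : ℕ) (ν : ℕ) (m : Fin n → ℤ) : EuclideanSpace ℝ (Fin n) :=
  WithLp.toLp 2 (fun i => (2 : ℝ) ^ (-(ν : ℤ)) * (m i : ℝ))

/-
For `x ∈ Q` and `y ∈ E ⊆ d·Q`, where `Q` has side `t⁻¹`, the coordinates of `x - y` are at most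
`(1 + d) t⁻¹ / 2`, so `1 + t‖x - y‖ ≤ 1 + (1 + d)√n`. Hence the kernel is at least
`tⁿ (1 + (1 + d)√n)^{-R}` on `E`, and integrating over `E`, whose measure is at least `ε t⁻ⁿ`,
gives the lower bound; the indicator bound is its reciprocal form.
-/

theorem EuclideanSpace.norm_le_sqrt_card_mul {ι : Type*} [Fintype ι] {v : EuclideanSpace ℝ ι}
    {c : ℝ} (h : ∀ i, |v i| ≤ c) : ‖v‖ ≤ √(Fintype.card ι) * c := by
  cases isEmpty_or_nonempty ι with
  | inl _ => simp [Subsingleton.elim v 0]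
  | inr hι =>
    have hc : 0 ≤ c := (abs_nonneg _).trans (h hι.some)
    calc ‖v‖ = √(∑ i, ‖v i‖ ^ 2) := EuclideanSpace.norm_eq v
      _ ≤ √(∑ _ : ι, c ^ 2) := by
        gcongr with i
        exact Real.norm_eq_abs (v i) ▸ h i
      _ = √(Fintype.card ι) * c := by
        rw [Finset.sum_const, Finset.card_univ, nsmul_eq_mul, Real.sqrt_mul (by positivity),
          Real.sqrt_sq hc]

theorem norm_sub_le_of_mem_cube {n : ℕ} {z x y : EuclideanSpace ℝ (Fin n)} {l l' : ℝ}
    (hx : x ∈ cube n z l) (hy : y ∈ cube n z l') : ‖x - y‖ ≤ √n * ((l + l') / 2) := by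
  have hcoord (i : Fin n) : |(x - y) i| ≤ (l + l') / 2 :=
    calc |(x - y) i| = |(x i - z i) - (y i - z i)| := by simp
      _ ≤ |x i - z i| + |y i - z i| := abs_sub _ _
      _ ≤ (l + l') / 2 := by linarith [hx i, hy i]
  simpa using EuclideanSpace.norm_le_sqrt_card_mul hcoord

theorem cube_subset_closedBall (n : ℕ) (z : EuclideanSpace ℝ (Fin n)) (l : ℝ) :
    cube n z l ⊆ Metric.closedBall z (√n * (l / 2)) := fun y hy => by
  simpa [dist_eq_norm] using EuclideanSpace.norm_le_sqrt_card_mul (hy ·)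

theorem rpow_neg_le_kernel_of_mem_cube {n : ℕ} {z x y : EuclideanSpace ℝ (Fin n)}
    {t d R : ℝ} (ht : 0 < t) (hd : 0 ≤ 1 + d) (hR : 0 ≤ R)
    (hx : x ∈ cube n z t⁻¹) (hy : y ∈ cube n z (d * t⁻¹)) :
    (1 + (1 + d) * √n) ^ (-R) ≤ (1 + t * ‖x - y‖) ^ (-R) := by
  have hdist : t * ‖x - y‖ ≤ (1 + d) * √n / 2 :=
    calc t * ‖x - y‖ ≤ t * (√n * ((t⁻¹ + d * t⁻¹) / 2)) := by
          gcongr; exact norm_sub_le_of_mem_cube hx hy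
      _ = (1 + d) * √n / 2 := by field_simp
  have : 0 ≤ (1 + d) * √n := by positivity
  exact Real.rpow_le_rpow_of_nonpos (by positivity) (by linarith) (neg_nonpos.mpr hR)

theorem le_setIntegral_kernel_of_mem_cube {n : ℕ} {z x : EuclideanSpace ℝ (Fin n)}
    {t d R ε : ℝ} (ht : 0 < t) (hd : 0 ≤ 1 + d) (hR : 0 ≤ R)
    {E : Set (EuclideanSpace ℝ (Fin n))} (hE : MeasurableSet E) (hEQ : E ⊆ cube n z (d * t⁻¹))
    (hvol : ENNReal.ofReal (ε * (t ^ n)⁻¹) ≤ volume E) (hx : x ∈ cube n z t⁻¹) :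
    ε * (1 + (1 + d) * √n) ^ (-R) ≤ ∫ y in E, t ^ n * (1 + t * ‖x - y‖) ^ (-R) := by
  set K := (1 + (1 + d) * √n) ^ (-R)
  have hball := hEQ.trans (cube_subset_closedBall n z (d * t⁻¹))
  have hEfin : volume E ≠ ⊤ :=
    ne_top_of_le_ne_top measure_closedBall_lt_top.ne (measure_mono hball)
  have hcont : Continuous fun y => t ^ n * (1 + t * ‖x - y‖) ^ (-R) := by
    refine continuous_const.mul (.rpow_const (by fun_prop) fun y => .inl ?_)
    positivity
  have hint : IntegrableOn (fun y => t ^ n * (1 + t * ‖x - y‖) ^ (-R)) E :=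
    (hcont.continuousOn.integrableOn_compact (isCompact_closedBall _ _)).mono_set hball
  have hbound : ∀ y ∈ E, t ^ n * K ≤ t ^ n * (1 + t * ‖x - y‖) ^ (-R) := fun y hy => by
    gcongr; exact rpow_neg_le_kernel_of_mem_cube ht hd hR hx (hEQ hy)
  calc ε * K = t ^ n * K * (ε * (t ^ n)⁻¹) := by field_simp
    _ ≤ t ^ n * K * volume.real E := by
        gcongr
        exact (ENNReal.ofReal_le_iff_le_toReal hEfin).mp hvol
    _ ≤ _ := setIntegral_ge_of_const_le_real hE hEfin hbound hint

theorem Set.indicator_one_le_inv_mul {α : Type*} {s : Set α} {f : α → ℝ} {c : ℝ} (hc : 0 < c)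
    (hs : ∀ x ∈ s, c ≤ f x) (hf : ∀ x, 0 ≤ f x) (x : α) :
    s.indicator (fun _ => (1 : ℝ)) x ≤ c⁻¹ * f x := by
  by_cases hx : x ∈ s
  · rw [Set.indicator_of_mem hx, ← div_eq_inv_mul, one_le_div hc]
    exact hs x hx
  · rw [Set.indicator_of_notMem hx]
    exact mul_nonneg (inv_nonneg.mpr hc.le) (hf x)

theorem stmt_2_general (n : ℕ) (d : ℝ) (hd : 1 < d) (ν : ℕ)
    (xc : EuclideanSpace ℝ (Fin n))
    (ε R : ℝ) (hε : 0 < ε) (hR : 0 < R)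
    (E : Set (EuclideanSpace ℝ (Fin n))) (hEmeas : MeasurableSet E)
    (hEQ : E ⊆ cube n xc (d * (2 : ℝ) ^ (-(ν : ℤ))))
    (hvol : ENNReal.ofReal (ε * (2 : ℝ) ^ (-((ν : ℤ) * (n : ℤ)))) ≤ volume E) :
    (∀ x ∈ cube n xc ((2 : ℝ) ^ (-(ν : ℤ))),
        ε * (1 + (1 + d) * Real.sqrt n) ^ (-R)
          ≤ ∫ y in E, (2 : ℝ) ^ (n * ν) * (1 + (2 : ℝ) ^ ν * ‖x - y‖) ^ (-R)) ∧
    (∀ x : EuclideanSpace ℝ (Fin n),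
        (cube n xc ((2 : ℝ) ^ (-(ν : ℤ)))).indicator (fun _ => (1 : ℝ)) x
          ≤ ε⁻¹ * (1 + (1 + d) * Real.sqrt n) ^ R *
            ∫ y in E, (2 : ℝ) ^ (n * ν) * (1 + (2 : ℝ) ^ ν * ‖x - y‖) ^ (-R)) := by
  have hside : (2 : ℝ) ^ (-(ν : ℤ)) = ((2 : ℝ) ^ ν)⁻¹ := by rw [zpow_neg, zpow_natCast]
  have hvol' : (2 : ℝ) ^ (-((ν : ℤ) * (n : ℤ))) = (((2 : ℝ) ^ ν) ^ n)⁻¹ := by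
    rw [zpow_neg, ← pow_mul, ← zpow_natCast]; push_cast; rfl
  have hweight : (2 : ℝ) ^ (n * ν) = ((2 : ℝ) ^ ν) ^ n := by rw [← pow_mul, mul_comm]
  rw [hside] at hEQ ⊢
  rw [hvol'] at hvol
  simp only [hweight]
  have lower := fun x (hx : x ∈ cube n xc ((2 : ℝ) ^ ν)⁻¹) =>
    le_setIntegral_kernel_of_mem_cube (by positivity) (by linarith) hR.le hEmeas hEQ hvol hx
  refine ⟨lower, fun x => ?_⟩
  have hK : 0 < (1 + (1 + d) * √n) ^ (-R) := Real.rpow_pos_of_pos (by positivity) _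
  have hinv : (ε * (1 + (1 + d) * √n) ^ (-R))⁻¹ = ε⁻¹ * (1 + (1 + d) * √n) ^ R := by
    rw [mul_inv, Real.rpow_neg (by positivity), inv_inv]
  refine hinv ▸ Set.indicator_one_le_inv_mul (by positivity) lower (fun x => ?_) x
  exact integral_nonneg fun y => by positivity

/-- If `E ⊆ d·Q_{ν,m}` is measurable with `|E| ≥ ε·2^{-νn}`, then for every `x ∈ Q_{ν,m}`
one has `(η_{ν,R} ∗ χ_E)(x) ≥ ε·(1+(1+d)√n)^{-R}`; in particular
`χ_{Q_{ν,m}} ≤ ε⁻¹(1+(1+d)√n)^{R} · (η_{ν,R} ∗ χ_E)` pointwise on `ℝⁿ`. -/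
theorem stmt_2 (n : ℕ) (b d : ℝ) (hb : 0 < b) (hd : 1 < d) (ν : ℕ) (m : Fin n → ℤ)
    (xc : EuclideanSpace ℝ (Fin n))
    (hxc : ‖xc - latticePt n ν m‖ ≤ b * (2 : ℝ) ^ (-(ν : ℤ)))
    (ε R : ℝ) (hε : 0 < ε) (hR : 0 < R)
    (E : Set (EuclideanSpace ℝ (Fin n))) (hEmeas : MeasurableSet E)
    (hEQ : E ⊆ cube n xc (d * (2 : ℝ) ^ (-(ν : ℤ))))
    (hvol : ENNReal.ofReal (ε * (2 : ℝ) ^ (-((ν : ℤ) * (n : ℤ)))) ≤ volume E) :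
    (∀ x ∈ cube n xc ((2 : ℝ) ^ (-(ν : ℤ))),
        ε * (1 + (1 + d) * Real.sqrt n) ^ (-R)
          ≤ ∫ y in E, (2 : ℝ) ^ (n * ν) * (1 + (2 : ℝ) ^ ν * ‖x - y‖) ^ (-R)) ∧
    (∀ x : EuclideanSpace ℝ (Fin n),
        (cube n xc ((2 : ℝ) ^ (-(ν : ℤ)))).indicator (fun _ => (1 : ℝ)) x
          ≤ ε⁻¹ * (1 + (1 + d) * Real.sqrt n) ^ R *
            ∫ y in E, (2 : ℝ) ^ (n * ν) * (1 + (2 : ℝ) ^ ν * ‖x - y‖) ^ (-R)) :=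
  stmt_2_general n d hd ν xc ε R hε hR E hEmeas hEQ hvol
end
end

section
/- Let s : ℝⁿ → ℝ be bounded and locally log-Hölder continuous with constant c_log(s). Then the sequence w_j(x) := 2^{j·s(x)}, j ∈ ℕ₀, is an admissible weight sequence in the class 𝒲^α_{α₁,α₂}(ℝⁿ) with α = c_log(s), α₁ = inf_{x∈ℝⁿ} s(x) and α₂ = sup_{x∈ℝⁿ} s(x); explicitly: (i) there exists a constant c > 0 (depending only on c_log(s)) such that 0 < 2^{j·s(x)} ≤ c·2^{j·s(y)}·(1 + 2^j|x − y|)^{c_log(s)} for all j ∈ ℕ₀ and all x, y ∈ ℝⁿ, and (ii) 2^{α₁}·2^{j·s(x)} ≤ 2^{(j+1)·s(x)} ≤ 2^{α₂}·2^{j·s(x)} for all j ∈ ℕ₀ and all x ∈ ℝⁿ. -/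
noncomputable section

/-- If `s : ℝⁿ → ℝ` is bounded and locally log-Hölder continuous with constant
`c_log(s)`, then `w_j(x) = 2^{j s(x)}` is an admissible weight sequence in the class
`𝒲^α_{α₁,α₂}(ℝⁿ)` with `α = c_log(s)`, `α₁ = inf s` and `α₂ = sup s`. -/
theorem stmt_5 (n : ℕ) (s : EuclideanSpace ℝ (Fin n) → ℝ) (clog : ℝ) (hclog : 0 ≤ clog)
    (M : ℝ) (hbdd : ∀ x, |s x| ≤ M)
    (hs : ∀ x y : EuclideanSpace ℝ (Fin n), x ≠ y →
      |s x - s y| ≤ clog / Real.log (Real.exp 1 + 1 / ‖x - y‖)) :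
    (∃ c : ℝ, 0 < c ∧ ∀ (j : ℕ) (x y : EuclideanSpace ℝ (Fin n)),
        0 < (2 : ℝ) ^ ((j : ℝ) * s x) ∧
        (2 : ℝ) ^ ((j : ℝ) * s x)
          ≤ c * (2 : ℝ) ^ ((j : ℝ) * s y) * (1 + (2 : ℝ) ^ j * ‖x - y‖) ^ clog) ∧
    (∀ (j : ℕ) (x : EuclideanSpace ℝ (Fin n)),
        (2 : ℝ) ^ (⨅ z, s z) * (2 : ℝ) ^ ((j : ℝ) * s x)
            ≤ (2 : ℝ) ^ (((j : ℝ) + 1) * s x) ∧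
        (2 : ℝ) ^ (((j : ℝ) + 1) * s x)
            ≤ (2 : ℝ) ^ (⨆ z, s z) * (2 : ℝ) ^ ((j : ℝ) * s x)) := by
  have h2 : (0:ℝ) < 2 := by norm_num
  constructor
  · refine ⟨Real.exp clog, Real.exp_pos _, fun j x y => ?_⟩
    refine ⟨Real.rpow_pos_of_pos h2 _, ?_⟩
    set r : ℝ := ‖x - y‖ with hrdef
    have hr0 : 0 ≤ r := norm_nonneg _
    have hpowj : (0:ℝ) < (2:ℝ) ^ j := by positivity
    have hB : (0:ℝ) < 1 + (2:ℝ) ^ j * r := by positivity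
    -- key exponent inequality
    have key : Real.log 2 * ((j : ℝ) * (s x - s y))
        ≤ clog + clog * Real.log (1 + (2:ℝ) ^ j * r) := by
      have hlogB : 0 ≤ Real.log (1 + (2:ℝ) ^ j * r) := by
        apply Real.log_nonneg; nlinarith
      by_cases hxy : x = y
      · subst hxy
        simp only [sub_self, mul_zero]
        nlinarith
      · have hrpos : 0 < r := by
          rw [hrdef]; rw [norm_pos_iff]; exact sub_ne_zero.mpr hxy
        set L : ℝ := Real.log (Real.exp 1 + 1 / r) with hLdef
        have hL1 : 1 < L := by
          have hlt : Real.exp 1 < Real.exp 1 + 1 / r := by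
            have : 0 < 1 / r := by positivity
            linarith
          calc (1:ℝ) = Real.log (Real.exp 1) := (Real.log_exp 1).symm
            _ < L := Real.log_lt_log (Real.exp_pos 1) hlt
        have hLpos : 0 < L := by linarith
        have hΔ : s x - s y ≤ clog / L := by
          have := hs x y hxy
          rw [← hrdef, ← hLdef] at this
          exact (abs_le.mp this).2
        set t : ℝ := (j : ℝ) * Real.log 2 with htdef
        have ht0 : 0 ≤ t := by
          apply mul_nonneg (Nat.cast_nonneg _) (Real.log_nonneg (by norm_num))
        have hmain : t / L ≤ 1 + Real.log (1 + (2:ℝ) ^ j * r) := by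
          rcases le_or_gt t L with hc | hc
          · have : t / L ≤ 1 := by rw [div_le_one hLpos]; exact hc
            linarith
          · -- t > L : then 2^j * r > 1
            have hexp : (2:ℝ) ^ j = Real.exp t := by
              rw [htdef, Real.exp_nat_mul, Real.exp_log h2]
            have hgt : 1 < (2:ℝ) ^ j * r := by
              have h1 : Real.exp L < Real.exp t := Real.exp_lt_exp.mpr hc
              have h2' : Real.exp L = Real.exp 1 + 1 / r := by
                rw [hLdef]; exact Real.exp_log (by positivity)
              have : 1 / r < (2:ℝ) ^ j := by
                rw [hexp]; rw [h2'] at h1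
                have := Real.exp_pos 1
                linarith
              calc (1:ℝ) = (1/r) * r := by field_simp
                _ < (2:ℝ) ^ j * r := by
                    exact mul_lt_mul_of_pos_right this hrpos
            have hGlb : t + Real.log r ≤ Real.log (1 + (2:ℝ) ^ j * r) := by
              have : Real.log ((2:ℝ) ^ j * r) ≤ Real.log (1 + (2:ℝ) ^ j * r) := by
                apply Real.log_le_log (by positivity); linarith
              rwa [Real.log_mul (by positivity) (ne_of_gt hrpos), Real.log_pow,
                ← htdef] at this
            have hta : -Real.log r < t := by
              have : 0 < Real.log ((2:ℝ) ^ j * r) := Real.log_pos hgt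
              rw [Real.log_mul (by positivity) (ne_of_gt hrpos), Real.log_pow,
                ← htdef] at this
              linarith
            have hLa : -Real.log r ≤ L := by
              rcases le_or_gt r 1 with hr1 | hr1
              · have : Real.log (1 / r) ≤ L := by
                  rw [hLdef]
                  apply Real.log_le_log (by positivity)
                  have := Real.exp_pos 1
                  nlinarith [Real.add_one_le_exp (1:ℝ)]
                rwa [Real.log_div one_ne_zero (ne_of_gt hrpos), Real.log_one,
                  zero_sub] at this
              · have : 0 < Real.log r := Real.log_pos hr1
                linarith
            -- now pure arithmetic
            rw [div_le_iff₀ hLpos]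
            set a : ℝ := -Real.log r
            have step : t ≤ L * (1 + (t - a)) := by nlinarith [(t - a) * (L - 1)]
            have : L * (1 + (t - a)) ≤ L * (1 + Real.log (1 + (2:ℝ) ^ j * r)) := by
              apply mul_le_mul_of_nonneg_left _ (le_of_lt hLpos)
              have : t - a ≤ Real.log (1 + (2:ℝ) ^ j * r) := by
                simp only [a]; linarith
              linarith
            calc t ≤ L * (1 + (t - a)) := step
              _ ≤ L * (1 + Real.log (1 + (2:ℝ) ^ j * r)) := this
              _ = (1 + Real.log (1 + (2:ℝ) ^ j * r)) * L := by ring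
        -- combine
        have h1 : (j : ℝ) * (s x - s y) ≤ (j : ℝ) * (clog / L) := by
          apply mul_le_mul_of_nonneg_left hΔ (Nat.cast_nonneg _)
        have h2'' : Real.log 2 * ((j : ℝ) * (clog / L)) = clog * (t / L) := by
          rw [htdef]; field_simp
        have h3 : clog * (t / L) ≤ clog * (1 + Real.log (1 + (2:ℝ) ^ j * r)) :=
          mul_le_mul_of_nonneg_left hmain hclog
        have hlog2 : 0 ≤ Real.log 2 := Real.log_nonneg (by norm_num)
        calc Real.log 2 * ((j : ℝ) * (s x - s y))
            ≤ Real.log 2 * ((j : ℝ) * (clog / L)) :=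
              mul_le_mul_of_nonneg_left h1 hlog2
          _ = clog * (t / L) := h2''
          _ ≤ clog * (1 + Real.log (1 + (2:ℝ) ^ j * r)) := h3
          _ = clog + clog * Real.log (1 + (2:ℝ) ^ j * r) := by ring
    -- translate key into the rpow inequality
    have hkey2 : (2:ℝ) ^ ((j : ℝ) * (s x - s y))
        ≤ Real.exp clog * (1 + (2:ℝ) ^ j * r) ^ clog := by
      rw [Real.rpow_def_of_pos h2, Real.rpow_def_of_pos hB, ← Real.exp_add]
      apply Real.exp_le_exp.mpr
      calc Real.log 2 * ((j : ℝ) * (s x - s y))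
          ≤ clog + clog * Real.log (1 + (2:ℝ) ^ j * r) := key
        _ = clog + Real.log (1 + (2:ℝ) ^ j * r) * clog := by ring
    calc (2:ℝ) ^ ((j : ℝ) * s x)
        = (2:ℝ) ^ ((j : ℝ) * s y) * (2:ℝ) ^ ((j : ℝ) * (s x - s y)) := by
          rw [← Real.rpow_add h2]; ring_nf
      _ ≤ (2:ℝ) ^ ((j : ℝ) * s y) * (Real.exp clog * (1 + (2:ℝ) ^ j * r) ^ clog) :=
          mul_le_mul_of_nonneg_left hkey2 (le_of_lt (Real.rpow_pos_of_pos h2 _))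
      _ = Real.exp clog * (2:ℝ) ^ ((j : ℝ) * s y) * (1 + (2:ℝ) ^ j * r) ^ clog := by
          ring
  · intro j x
    have hBb : BddBelow (Set.range s) := by
      refine ⟨-M, ?_⟩
      rintro _ ⟨z, rfl⟩
      linarith [(abs_le.mp (hbdd z)).1]
    have hBa : BddAbove (Set.range s) := by
      refine ⟨M, ?_⟩
      rintro _ ⟨z, rfl⟩
      exact (abs_le.mp (hbdd z)).2
    have h1 : (⨅ z, s z) ≤ s x := ciInf_le hBb x
    have h2' : s x ≤ ⨆ z, s z := le_ciSup hBa x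
    have hexpand : ((j : ℝ) + 1) * s x = (j : ℝ) * s x + s x := by ring
    constructor
    · rw [← Real.rpow_add h2]
      apply Real.rpow_le_rpow_of_exponent_le (by norm_num)
      rw [hexpand]; linarith
    · rw [← Real.rpow_add h2]
      apply Real.rpow_le_rpow_of_exponent_le (by norm_num)
      rw [hexpand]; linarith
end
end

section
/- Let Ω ⊂ ℝⁿ be a domain (a nonempty open connected set) and let g : Ω → ℝ be bounded and globally log-Hölder continuous on Ω, i.e. there exist constants c₁, c₂ ≥ 0 and g_∞ ∈ ℝ such that |g(x) − g(y)| ≤ c₁/log(e + 1/|x − y|) for all x, y ∈ Ω with x ≠ y, and |g(x) − g_∞| ≤ c₂/log(e + |x|) for all x ∈ Ω. Then there exists a function G : ℝⁿ → ℝ with G|_Ω = g which is globally log-Hölder continuous on ℝⁿ (i.e. there exist constants c₁′, c₂′ ≥ 0 and G_∞ ∈ ℝ such that the two inequalities above hold for G with these constants for all points of ℝⁿ) and which satisfies inf_{Ω} g ≤ G(x) ≤ sup_{Ω} g for all x ∈ ℝⁿ. -/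
noncomputable section

private lemma aux_one_le_log {t : ℝ} (ht : 0 ≤ t) : 1 ≤ Real.log (Real.exp 1 + t) := by
  calc (1:ℝ) = Real.log (Real.exp 1) := (Real.log_exp 1).symm
    _ ≤ _ := Real.log_le_log (Real.exp_pos 1) (by linarith)

private lemma aux_log_sub_log_le {a b : ℝ} (ha : 0 < a) (hb : 0 < b) :
    Real.log a - Real.log b ≤ a / b - 1 := by
  rw [← Real.log_div ha.ne' hb.ne']
  exact Real.log_le_sub_one_of_pos (div_pos ha hb)

/-- monotonicity of `t * log (e + 1/t)` -/
private lemma aux_tL_mono {a b : ℝ} (hb : 0 < b) (hba : b ≤ a) :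
    b * Real.log (Real.exp 1 + 1/b) ≤ a * Real.log (Real.exp 1 + 1/a) := by
  have ha : 0 < a := lt_of_lt_of_le hb hba
  have hE : (0:ℝ) < Real.exp 1 := Real.exp_pos 1
  have h1 : 0 < Real.exp 1 + 1/a := by positivity
  have h2 : 0 < Real.exp 1 + 1/b := by positivity
  have key : Real.log (Real.exp 1 + 1/b) - Real.log (Real.exp 1 + 1/a) ≤ a / b - 1 := by
    refine le_trans (aux_log_sub_log_le h2 h1) ?_
    have : (Real.exp 1 + 1/b) / (Real.exp 1 + 1/a) ≤ a / b := by
      rw [div_le_div_iff₀ h1 hb]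
      have e1 : (1:ℝ)/a * a = 1 := by field_simp
      have e2 : (1:ℝ)/b * b = 1 := by field_simp
      nlinarith [mul_pos hE hb, mul_pos hE ha]
    linarith
  have hLa : 1 ≤ Real.log (Real.exp 1 + 1/a) := aux_one_le_log (by positivity)
  have key2 : b * (Real.log (Real.exp 1 + 1/b) - Real.log (Real.exp 1 + 1/a)) ≤ a - b := by
    have h5 := mul_le_mul_of_nonneg_left key hb.le
    have e3 : b * (a/b - 1) = a - b := by field_simp
    linarith
  nlinarith [key2, hLa, sub_nonneg.mpr hba]

/-- key step: `log(e+1/a) - log(e+1/(a+b)) ≤ b/a` -/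
private lemma aux_L_diff_le {a b : ℝ} (ha : 0 < a) (hb : 0 < b) :
    Real.log (Real.exp 1 + 1/a) - Real.log (Real.exp 1 + 1/(a+b)) ≤ b / a := by
  have hE : (0:ℝ) < Real.exp 1 := Real.exp_pos 1
  have hab : 0 < a + b := by linarith
  have h1 : 0 < Real.exp 1 + 1/a := by positivity
  have h2 : 0 < Real.exp 1 + 1/(a+b) := by positivity
  refine le_trans (aux_log_sub_log_le h1 h2) ?_
  rw [div_sub_one h2.ne', div_le_div_iff₀ h2 ha]
  have e1 : (1:ℝ)/a * a = 1 := by field_simp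
  have e2 : (1:ℝ)/(a+b) * (a+b) = 1 := by field_simp
  nlinarith [mul_pos hE hab, mul_pos hb (mul_pos hE hab), mul_pos hb h2]

/-- subadditivity of `1 / log(e + 1/t)` -/
private lemma aux_subadd' {a b : ℝ} (hb : 0 < b) (hba : b ≤ a) :
    1 / Real.log (Real.exp 1 + 1/(a+b)) ≤
      1 / Real.log (Real.exp 1 + 1/a) + 1 / Real.log (Real.exp 1 + 1/b) := by
  have ha : 0 < a := lt_of_lt_of_le hb hba
  set La := Real.log (Real.exp 1 + 1/a) with hLa'
  set Lb := Real.log (Real.exp 1 + 1/b) with hLb'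
  set Lab := Real.log (Real.exp 1 + 1/(a+b)) with hLab'
  have hLa : 1 ≤ La := aux_one_le_log (by positivity)
  have hLb : 1 ≤ Lb := aux_one_le_log (by positivity)
  have hLab : 1 ≤ Lab := aux_one_le_log (by positivity)
  have hd : La - Lab ≤ b / a := aux_L_diff_le ha hb
  have ht : b * Lb ≤ a * La := aux_tL_mono hb hba
  -- goal equivalent to La * Lb ≤ Lab * (Lb + La)
  rw [div_add_div _ _ (by linarith : La ≠ 0) (by linarith : Lb ≠ 0),
    div_le_div_iff₀ (by linarith) (by positivity)]
  -- (La - Lab) * Lb ≤ (b/a) * Lb = (b*Lb)/a ≤ La ≤ La * Lab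
  have h3 : (La - Lab) * Lb ≤ (b / a) * Lb := by
    apply mul_le_mul_of_nonneg_right hd (by linarith)
  have h4 : (b / a) * Lb ≤ La := by
    rw [div_mul_eq_mul_div, div_le_iff₀ ha]
    nlinarith
  nlinarith

private lemma aux_subadd {a b : ℝ} (ha : 0 < a) (hb : 0 < b) :
    1 / Real.log (Real.exp 1 + 1/(a+b)) ≤
      1 / Real.log (Real.exp 1 + 1/a) + 1 / Real.log (Real.exp 1 + 1/b) := by
  rcases le_total b a with h | h
  · exact aux_subadd' hb h
  · rw [add_comm a b, add_comm (1/ Real.log (Real.exp 1 + 1/a))]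
    exact aux_subadd' ha h

/-- antitonicity of L -/
private lemma aux_L_anti {a b : ℝ} (hb : 0 < b) (hba : b ≤ a) :
    Real.log (Real.exp 1 + 1/a) ≤ Real.log (Real.exp 1 + 1/b) := by
  have ha : 0 < a := lt_of_lt_of_le hb hba
  apply Real.log_le_log (by positivity)
  have : 1/a ≤ 1/b := one_div_le_one_div_of_le hb hba
  linarith

private lemma aux_log_e1 : Real.log (Real.exp 1 + 1) ≤ 2 := by
  have h2 : (2:ℝ) ≤ Real.exp 1 := by nlinarith [Real.add_one_le_exp 1]
  have h3 : Real.exp 1 + 1 ≤ Real.exp 1 * Real.exp 1 := by nlinarith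
  calc Real.log (Real.exp 1 + 1) ≤ Real.log (Real.exp 1 * Real.exp 1) :=
        Real.log_le_log (by positivity) h3
    _ = 2 := by
        rw [Real.log_mul (by positivity) (by positivity), Real.log_exp]; ring

/-- Lipschitz + bounded implies log-Hölder: the envelope estimate. -/
private lemma aux_env' {c t a b : ℝ} (hc : 0 ≤ c) (ht : 0 < t) (hb : 0 ≤ b) (hba : b ≤ a)
    (hab : a - b ≤ t) :
    c / Real.log (Real.exp 1 + b) - c / Real.log (Real.exp 1 + a) ≤
      2 * c / Real.log (Real.exp 1 + 1/t) := by
  have ha : 0 ≤ a := le_trans hb hba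
  have hLa : 1 ≤ Real.log (Real.exp 1 + a) := aux_one_le_log ha
  have hLb : 1 ≤ Real.log (Real.exp 1 + b) := aux_one_le_log hb
  have hLt : 1 ≤ Real.log (Real.exp 1 + 1/t) := aux_one_le_log (by positivity)
  set La := Real.log (Real.exp 1 + a)
  set Lb := Real.log (Real.exp 1 + b)
  set Lt := Real.log (Real.exp 1 + 1/t)
  have hE : (0:ℝ) < Real.exp 1 := Real.exp_pos 1
  have hdiff : La - Lb ≤ a - b := by
    have h1 := aux_log_sub_log_le (show (0:ℝ) < Real.exp 1 + a by positivity)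
      (show (0:ℝ) < Real.exp 1 + b by positivity)
    have h2 : (Real.exp 1 + a) / (Real.exp 1 + b) - 1 ≤ a - b := by
      rw [div_sub_one (by positivity : (Real.exp 1 + b) ≠ 0)]
      rw [div_le_iff₀ (by positivity)]
      nlinarith [mul_nonneg (sub_nonneg.mpr hba)
        (by nlinarith [Real.add_one_le_exp 1] : (0:ℝ) ≤ Real.exp 1 + b - 1)]
    linarith
  -- c/Lb - c/La = c (La - Lb)/(La Lb) ≤ c (a-b) and also ≤ c
  have key1 : c / Lb - c / La ≤ c * (a - b) := by
    have h3 : c / Lb - c / La = c * (La - Lb) / (Lb * La) := by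
      field_simp
    rw [h3, div_le_iff₀ (by nlinarith : (0:ℝ) < Lb * La)]
    have h4 : c * (La - Lb) ≤ c * (a - b) := mul_le_mul_of_nonneg_left hdiff hc
    have h5 : c * (a - b) ≤ c * (a - b) * (Lb * La) :=
      le_mul_of_one_le_right (mul_nonneg hc (sub_nonneg.mpr hba)) (by nlinarith)
    linarith
  have key2 : c / Lb - c / La ≤ c := by
    have h1 : c / Lb ≤ c := by
      rw [div_le_iff₀ (by linarith)]; nlinarith
    have h2 : 0 ≤ c / La := div_nonneg hc (by linarith)
    linarith
  rcases le_total 1 t with h1t | h1t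
  · -- t ≥ 1 : Lt ≤ 2 so RHS ≥ c
    have hLt2 : Lt ≤ 2 := by
      have : Real.exp 1 + 1/t ≤ Real.exp 1 + 1 := by
        have : 1/t ≤ 1 := by rw [div_le_one ht]; exact h1t
        linarith
      calc Lt ≤ Real.log (Real.exp 1 + 1) := Real.log_le_log (by positivity) this
        _ ≤ 2 := aux_log_e1
    have : c ≤ 2 * c / Lt := by
      rw [le_div_iff₀ (by linarith)]; nlinarith
    linarith
  · -- t ≤ 1 : use Lipschitz bound, t * Lt ≤ log(e+1) ≤ 2
    have htLt : t * Lt ≤ 2 := by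
      have h1 : t * Lt ≤ 1 * Real.log (Real.exp 1 + 1/1) := aux_tL_mono ht h1t
      have : Real.log (Real.exp 1 + 1/1) ≤ 2 := by norm_num [aux_log_e1]
      nlinarith
    have hcab : c * (a - b) ≤ c * t := mul_le_mul_of_nonneg_left hab hc
    have : c * t ≤ 2 * c / Lt := by
      rw [le_div_iff₀ (by linarith)]
      calc c * t * Lt = c * (t * Lt) := by ring
        _ ≤ c * 2 := mul_le_mul_of_nonneg_left htLt hc
        _ = 2 * c := by ring
    linarith

private lemma aux_env {c t a b : ℝ} (hc : 0 ≤ c) (ht : 0 < t) (ha : 0 ≤ a) (hb : 0 ≤ b)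
    (hab : |a - b| ≤ t) :
    |c / Real.log (Real.exp 1 + a) - c / Real.log (Real.exp 1 + b)| ≤
      2 * c / Real.log (Real.exp 1 + 1/t) := by
  have mono : ∀ u v : ℝ, 0 ≤ u → u ≤ v →
      c / Real.log (Real.exp 1 + v) ≤ c / Real.log (Real.exp 1 + u) := by
    intro u v hu huv
    have h1 : Real.log (Real.exp 1 + u) ≤ Real.log (Real.exp 1 + v) :=
      Real.log_le_log (by positivity) (by linarith)
    have h2 : (0:ℝ) < Real.log (Real.exp 1 + u) := by
      have := aux_one_le_log hu; linarith
    exact div_le_div_of_nonneg_left hc h2 h1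
  rcases le_total a b with h | h
  · rw [abs_of_nonneg (by linarith [mono a b ha h])]
    have := aux_env' hc ht ha h (by rw [abs_sub_comm, abs_of_nonneg (by linarith)] at hab; linarith)
    linarith
  · rw [abs_of_nonpos (by linarith [mono b a hb h])]
    have := aux_env' hc ht hb h (by rw [abs_of_nonneg (by linarith)] at hab; linarith)
    linarith

/-- A bounded, globally log-Hölder continuous function `g` on a domain `Ω ⊆ ℝⁿ` admits
an extension `G : ℝⁿ → ℝ` which is globally log-Hölder continuous on all of `ℝⁿ` and
satisfies `inf_Ω g ≤ G ≤ sup_Ω g` everywhere. -/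
theorem stmt_9 (n : ℕ) (Ω : Set (EuclideanSpace ℝ (Fin n)))
    (hΩopen : IsOpen Ω) (hΩconn : IsConnected Ω)
    (g : EuclideanSpace ℝ (Fin n) → ℝ) (M : ℝ) (hgb : ∀ x ∈ Ω, |g x| ≤ M)
    (c₁ c₂ : ℝ) (hc₁ : 0 ≤ c₁) (hc₂ : 0 ≤ c₂) (gLim : ℝ)
    (hloc : ∀ x ∈ Ω, ∀ y ∈ Ω, x ≠ y →
        |g x - g y| ≤ c₁ / Real.log (Real.exp 1 + 1 / ‖x - y‖))
    (hdecay : ∀ x ∈ Ω, |g x - gLim| ≤ c₂ / Real.log (Real.exp 1 + ‖x‖)) :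
    ∃ (G : EuclideanSpace ℝ (Fin n) → ℝ) (c₁' c₂' GLim : ℝ), 0 ≤ c₁' ∧ 0 ≤ c₂' ∧
      (∀ x ∈ Ω, G x = g x) ∧
      (∀ x y : EuclideanSpace ℝ (Fin n), x ≠ y →
        |G x - G y| ≤ c₁' / Real.log (Real.exp 1 + 1 / ‖x - y‖)) ∧
      (∀ x, |G x - GLim| ≤ c₂' / Real.log (Real.exp 1 + ‖x‖)) ∧
      (∀ x, sInf (g '' Ω) ≤ G x ∧ G x ≤ sSup (g '' Ω)) := by
  classical
  obtain ⟨x₀, hx₀⟩ := hΩconn.nonempty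
  set m := sInf (g '' Ω) with hm
  set S := sSup (g '' Ω) with hS
  have hbdd_above : BddAbove (g '' Ω) := ⟨M, by rintro v ⟨y, hy, rfl⟩; exact (abs_le.mp (hgb y hy)).2⟩
  have hbdd_below : BddBelow (g '' Ω) := ⟨-M, by rintro v ⟨y, hy, rfl⟩; exact (abs_le.mp (hgb y hy)).1⟩
  have hmg : ∀ y ∈ Ω, m ≤ g y := fun y hy => csInf_le hbdd_below ⟨y, hy, rfl⟩
  have hgS : ∀ y ∈ Ω, g y ≤ S := fun y hy => le_csSup hbdd_above ⟨y, hy, rfl⟩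
  have hmS : m ≤ S := le_trans (hmg x₀ hx₀) (hgS x₀ hx₀)
  set Glim := max m (min gLim S) with hGL
  have hGL_m : m ≤ Glim := le_max_left _ _
  have hGL_S : Glim ≤ S := max_le hmS (min_le_right _ _)
  -- clamping gLim into [m, S] does not hurt the decay estimate
  have hclamp : ∀ u, m ≤ u → u ≤ S → |u - Glim| ≤ |u - gLim| := by
    intro u hmu huS
    have h1 : Glim ≤ max u gLim :=
      max_le (le_trans hmu (le_max_left _ _)) (le_trans (min_le_left _ _) (le_max_right _ _))
    have h2 : min u gLim ≤ Glim := by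
      refine le_trans ?_ (le_max_right m (min gLim S))
      exact le_min (min_le_right u gLim) (le_trans (min_le_left u gLim) huS)
    rcases le_total u gLim with h | h
    · rw [max_eq_right h] at h1
      rw [min_eq_left h] at h2
      rw [abs_of_nonpos (by linarith), abs_of_nonpos (by linarith)]
      linarith
    · rw [max_eq_left h] at h1
      rw [min_eq_right h] at h2
      rw [abs_of_nonneg (by linarith), abs_of_nonneg (by linarith)]
      linarith
  have hdecay' : ∀ x ∈ Ω, |g x - Glim| ≤ c₂ / Real.log (Real.exp 1 + ‖x‖) := fun x hx =>
    le_trans (hclamp (g x) (hmg x hx) (hgS x hx)) (hdecay x hx)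
  -- the modulus
  set ow : ℝ → ℝ := fun t => if t = 0 then 0 else c₁ / Real.log (Real.exp 1 + 1/t) with how
  have how0 : ow 0 = 0 := by simp [how]
  have ow_pos_eq : ∀ t : ℝ, t ≠ 0 → ow t = c₁ / Real.log (Real.exp 1 + 1/t) := by
    intro t ht; simp [how, ht]
  have ow_nonneg : ∀ t : ℝ, 0 ≤ t → 0 ≤ ow t := by
    intro t ht
    rcases eq_or_lt_of_le ht with h | h
    · simp [how, ← h]
    · rw [ow_pos_eq t h.ne']
      exact div_nonneg hc₁ (le_trans zero_le_one (aux_one_le_log (by positivity)))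
  have ow_mono : ∀ s t : ℝ, 0 ≤ s → s ≤ t → ow s ≤ ow t := by
    intro s t hs hst
    rcases eq_or_lt_of_le hs with h | h
    · rw [← h, how0]; exact ow_nonneg t (le_trans hs hst)
    · have htpos : 0 < t := lt_of_lt_of_le h hst
      rw [ow_pos_eq s h.ne', ow_pos_eq t htpos.ne']
      have h1 := aux_L_anti h hst
      have h2 : (0:ℝ) < Real.log (Real.exp 1 + 1/t) :=
        lt_of_lt_of_le zero_lt_one (aux_one_le_log (by positivity))
      exact div_le_div_of_nonneg_left hc₁ h2 h1
  have ow_subadd : ∀ s t : ℝ, 0 ≤ s → 0 < t → ow (s + t) ≤ ow s + ow t := by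
    intro s t hs ht
    rcases eq_or_lt_of_le hs with h | h
    · rw [← h, how0, zero_add]; linarith
    · rw [ow_pos_eq s h.ne', ow_pos_eq t ht.ne', ow_pos_eq (s+t) (by positivity)]
      have h1 := aux_subadd h ht
      calc c₁ / Real.log (Real.exp 1 + 1/(s+t))
          = c₁ * (1 / Real.log (Real.exp 1 + 1/(s+t))) := by ring
        _ ≤ c₁ * (1 / Real.log (Real.exp 1 + 1/s) + 1 / Real.log (Real.exp 1 + 1/t)) :=
            mul_le_mul_of_nonneg_left h1 hc₁
        _ = c₁ / Real.log (Real.exp 1 + 1/s) + c₁ / Real.log (Real.exp 1 + 1/t) := by ring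
  -- McShane extension
  set T : EuclideanSpace ℝ (Fin n) → Set ℝ :=
    fun x => (fun y => g y + ow ‖x - y‖) '' Ω with hT
  set G₀ : EuclideanSpace ℝ (Fin n) → ℝ := fun x => sInf (T x) with hG₀def
  have hTne : ∀ x, (T x).Nonempty := fun x => ⟨_, x₀, hx₀, rfl⟩
  have hTbdd : ∀ x, BddBelow (T x) := by
    intro x
    refine ⟨m, ?_⟩
    rintro v ⟨y, hy, rfl⟩
    have h1 := ow_nonneg ‖x - y‖ (norm_nonneg _)
    have h2 := hmg y hy
    show _ ≤ g y + ow ‖x - y‖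
    linarith
  have hG₀_le : ∀ x, ∀ y ∈ Ω, G₀ x ≤ g y + ow ‖x - y‖ := fun x y hy =>
    csInf_le (hTbdd x) ⟨y, hy, rfl⟩
  have hG₀_ge_m : ∀ x, m ≤ G₀ x := by
    intro x
    refine le_csInf (hTne x) ?_
    rintro v ⟨y, hy, rfl⟩
    have h1 := ow_nonneg ‖x - y‖ (norm_nonneg _)
    have h2 := hmg y hy
    show _ ≤ g y + ow ‖x - y‖
    linarith
  have hG₀_eq : ∀ x ∈ Ω, G₀ x = g x := by
    intro x hx
    apply le_antisymm
    · have h1 := hG₀_le x x hx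
      simpa [how0] using h1
    · refine le_csInf (hTne x) ?_
      rintro v ⟨y, hy, rfl⟩
      by_cases hxy : x = y
      · subst hxy
        simp [how0]
      · have h1 := hloc x hx y hy hxy
        have hn : ‖x - y‖ ≠ 0 := by
          simp [sub_eq_zero, hxy]
        have h2 : g x - g y ≤ c₁ / Real.log (Real.exp 1 + 1/‖x - y‖) :=
          le_trans (le_abs_self _) h1
        show g x ≤ g y + ow ‖x - y‖
        rw [ow_pos_eq _ hn]
        linarith
  have hG₀_holder : ∀ x z : EuclideanSpace ℝ (Fin n), x ≠ z → G₀ x - G₀ z ≤ ow ‖x - z‖ := by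
    intro x z hxz
    have hnz : 0 < ‖x - z‖ := by
      rw [norm_pos_iff, sub_ne_zero]; exact hxz
    rw [sub_le_iff_le_add, add_comm]
    have : ∀ v ∈ T z, G₀ x - ow ‖x - z‖ ≤ v := by
      rintro v ⟨y, hy, rfl⟩
      have h1 : ‖x - y‖ ≤ ‖z - y‖ + ‖x - z‖ := by
        have e : x - y = (x - z) + (z - y) := by abel
        calc ‖x - y‖ = ‖(x - z) + (z - y)‖ := by rw [← e]
          _ ≤ ‖x - z‖ + ‖z - y‖ := norm_add_le _ _
          _ = ‖z - y‖ + ‖x - z‖ := by ring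
      have h2 : ow ‖x - y‖ ≤ ow ‖z - y‖ + ow ‖x - z‖ :=
        le_trans (ow_mono _ _ (norm_nonneg _) h1)
          (ow_subadd ‖z - y‖ ‖x - z‖ (norm_nonneg _) hnz)
      have h3 := hG₀_le x y hy
      show G₀ x - ow ‖x - z‖ ≤ g y + ow ‖z - y‖
      linarith
    have h4 : G₀ x - ow ‖x - z‖ ≤ G₀ z := le_csInf (hTne z) this
    linarith
  have hG₀_abs : ∀ x z : EuclideanSpace ℝ (Fin n), x ≠ z → |G₀ x - G₀ z| ≤ ow ‖x - z‖ := by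
    intro x z hxz
    rw [abs_sub_le_iff]
    refine ⟨hG₀_holder x z hxz, ?_⟩
    have := hG₀_holder z x (Ne.symm hxz)
    rwa [norm_sub_rev] at this
  -- envelopes and final function
  set ov : EuclideanSpace ℝ (Fin n) → ℝ := fun x => c₂ / Real.log (Real.exp 1 + ‖x‖) with hov
  have hov_nonneg : ∀ x, 0 ≤ ov x := fun x =>
    div_nonneg hc₂ (le_trans zero_le_one (aux_one_le_log (norm_nonneg x)))
  set Gf : EuclideanSpace ℝ (Fin n) → ℝ :=
    fun x => max (Glim - ov x) (min (min (G₀ x) S) (Glim + ov x)) with hGf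
  refine ⟨Gf, c₁ + 2*c₂, c₂, Glim, by linarith, hc₂, ?_, ?_, ?_, ?_⟩
  · -- agrees with g on Ω
    intro x hx
    have h1 := abs_le.mp (hdecay' x hx)
    simp only [hGf]
    rw [hG₀_eq x hx, min_eq_left (hgS x hx), min_eq_left (by linarith [h1.2] : g x ≤ Glim + ov x),
      max_eq_right (by linarith [h1.1] : Glim - ov x ≤ g x)]
  · -- global log-Hölder continuity
    intro x y hxy
    have ht : 0 < ‖x - y‖ := by rw [norm_pos_iff, sub_ne_zero]; exact hxy
    have hLt : 1 ≤ Real.log (Real.exp 1 + 1/‖x - y‖) := aux_one_le_log (by positivity)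
    set Lt := Real.log (Real.exp 1 + 1/‖x - y‖) with hLtdef
    have henv : |ov x - ov y| ≤ 2*c₂ / Lt :=
      aux_env hc₂ ht (norm_nonneg x) (norm_nonneg y) (abs_norm_sub_norm_le x y)
    have hA : |(Glim - ov x) - (Glim - ov y)| ≤ 2*c₂ / Lt := by
      rw [show (Glim - ov x) - (Glim - ov y) = -(ov x - ov y) by ring, abs_neg]
      exact henv
    have hB : |(Glim + ov x) - (Glim + ov y)| ≤ 2*c₂ / Lt := by
      rw [show (Glim + ov x) - (Glim + ov y) = ov x - ov y by ring]
      exact henv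
    have hg0 : |G₀ x - G₀ y| ≤ c₁ / Lt := by
      have := hG₀_abs x y hxy
      rwa [ow_pos_eq _ ht.ne'] at this
    have hmin1 : |min (G₀ x) S - min (G₀ y) S| ≤ c₁ / Lt := by
      refine le_trans (abs_min_sub_min_le_max _ _ _ _) ?_
      rw [sub_self, abs_zero]
      exact max_le hg0 (div_nonneg hc₁ (by linarith))
    have hmin2 : |min (min (G₀ x) S) (Glim + ov x) - min (min (G₀ y) S) (Glim + ov y)| ≤
        (c₁ + 2*c₂) / Lt := by
      refine le_trans (abs_min_sub_min_le_max _ _ _ _) ?_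
      rw [add_div]
      refine max_le (le_trans hmin1 ?_) (le_trans hB ?_)
      · have : 0 ≤ 2*c₂ / Lt := div_nonneg (by linarith) (by linarith)
        linarith
      · have : 0 ≤ c₁ / Lt := div_nonneg hc₁ (by linarith)
        linarith
    simp only [hGf]
    refine le_trans (abs_max_sub_max_le_max _ _ _ _) ?_
    refine max_le (le_trans hA ?_) hmin2
    rw [add_div]
    have : 0 ≤ c₁ / Lt := div_nonneg hc₁ (by linarith)
    linarith
  · -- decay at infinity
    intro x
    have hub : Gf x ≤ Glim + ov x := by
      simp only [hGf]
      exact max_le (by linarith [hov_nonneg x]) (min_le_right _ _)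
    have hlb : Glim - ov x ≤ Gf x := le_max_left _ _
    rw [abs_le]
    constructor
    · simp only [hov] at hlb ⊢
      linarith
    · simp only [hov] at hub ⊢
      linarith
  · -- pointwise bounds
    intro x
    constructor
    · refine le_trans ?_ (le_max_right (Glim - ov x) _)
      refine le_min (le_min (hG₀_ge_m x) hmS) ?_
      linarith [hov_nonneg x, hGL_m]
    · refine max_le (by linarith [hov_nonneg x, hGL_S]) ?_
      exact le_trans (min_le_left _ _) (min_le_right _ _)
end
end
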